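/- Let A be a semisimple regular commutative Banach algebra satisfying Ditkin's condition. Then A satisfies condition (M). -/

import Mathlib

open WeakDual Topology Filter

variable (A : Type*) [NormedCommRing A] [NormedAlgebra ℂ A]

/-- The cozero set of the Gelfand transform of `a`. -/
def gelfCoz {A : Type*} [NormedCommRing A] [NormedAlgebra ℂ A] (a : A) :
    Set (characterSpace ℂ A) := {x | x a ≠ 0}

/-- The support of the Gelfand transform of `a`. -/
def gelfSupp {A : Type*} [NormedCommRing A] [NormedAlgebra ℂ A] (a : A) :
    Set (characterSpace ℂ A) := closure (gelfCoz a)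

/-- `a` has compactly supported Gelfand transform. -/
def HasCompactGelfandSupport {A : Type*} [NormedCommRing A] [NormedAlgebra ℂ A] (a : A) :
    Prop := IsCompact (gelfSupp a)

/-- A commutative Banach algebra is Tauberian if elements with compactly supported
Gelfand transform are dense. -/
def Tauberian : Prop := Dense {a : A | HasCompactGelfandSupport a}

/-- Regularity: characters can be separated from closed sets by Gelfand transforms. -/
def Regular : Prop :=
  ∀ (x : characterSpace ℂ A) (U : Set (characterSpace ℂ A)), IsOpen U → x ∈ U →
    ∃ a : A, x a = 1 ∧ ∀ y : characterSpace ℂ A, y ∉ U → y a = 0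

/-- Semisimplicity: the Gelfand transform is injective. -/
def Semisimple : Prop := ∀ a : A, (∀ x : characterSpace ℂ A, x a = 0) → a = 0

/-- Condition (M). -/
def ConditionM : Prop :=
  Regular A ∧
  ∀ (x : characterSpace ℂ A) (a : A), x a = 0 →
    ∀ U ∈ 𝓝 x, ∀ ε > (0:ℝ), ∃ b : A,
      (∃ V ∈ 𝓝 x, ∀ y ∈ V, y b = 1) ∧ gelfSupp b ⊆ U ∧ ‖b * a‖ < ε

/-- An approximate identity bounded in norm by `D`. -/
def BddApproxId (D : ℝ) : Prop :=
  ∃ (ι : Type) (l : Filter ι) (_ : l.NeBot) (e : ι → A),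
    (∀ i, ‖e i‖ ≤ D) ∧ ∀ a : A, Tendsto (fun i => a * e i) l (𝓝 a)

/-- `D`-uniform regularity. -/
def DUniformlyRegular (D : ℝ) : Prop :=
  ∀ (x : characterSpace ℂ A) (U : Set (characterSpace ℂ A)), IsOpen U → x ∈ U →
    ∀ ε > (0:ℝ), ∃ a : A, x a = 1 ∧ gelfSupp a ⊆ U ∧ ‖a‖ ≤ D + ε

/-- Ditkin's condition for a commutative Banach algebra. -/
def DitkinCondition : Prop :=
  (∀ (a : A) (x : characterSpace ℂ A), x a = 0 →
      ∀ ε > (0:ℝ), ∃ b : A, (∃ V ∈ 𝓝 x, ∀ y ∈ V, y b = 0) ∧ ‖a * b - a‖ < ε) ∧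
  (¬ IsCompact (Set.univ : Set (characterSpace ℂ A)) →
      ∀ (a : A), ∀ ε > (0:ℝ), ∃ b : A, HasCompactGelfandSupport b ∧ ‖a * b - a‖ < ε)

section GelfandTransform

variable {A}

lemma isOpen_gelfCoz (a : A) : IsOpen (gelfCoz a) :=
  isOpen_ne_fun ((WeakDual.eval_continuous a).comp continuous_subtype_val) continuous_const

lemma gelfCoz_mul_subset_left (a b : A) : gelfCoz (a * b) ⊆ gelfCoz a := fun y hy ha =>
  hy (by rw [map_mul, ha, zero_mul])

lemma gelfSupp_mul_subset_left (a b : A) : gelfSupp (a * b) ⊆ gelfSupp a :=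
  closure_mono (gelfCoz_mul_subset_left a b)

def gelfVanishingIdeal (K : Set (characterSpace ℂ A)) : Ideal A where
  carrier := {b | ∀ y ∈ K, y b = 0}
  add_mem' ha hb y hy := by rw [map_add, ha y hy, hb y hy, add_zero]
  zero_mem' y _ := map_zero y
  smul_mem' r _ hb y hy := by rw [smul_eq_mul, map_mul, hb y hy, mul_zero]

/-- A proper ideal lies in a maximal one, whose quotient is `ℂ` by Gelfand–Mazur. -/
lemma Ideal.eq_top_of_forall_character_exists_ne_zero [CompleteSpace A] (I : Ideal A)
    (h : ∀ φ : characterSpace ℂ A, ∃ a ∈ I, φ a ≠ 0) : I = ⊤ := by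
  by_contra hI
  obtain ⟨M, hM, hIM⟩ := I.exists_le_maximal hI
  obtain ⟨a, haI, ha⟩ := h M.toCharacterSpace
  exact ha (M.toCharacterSpace_apply_eq_zero_of_mem (hIM haI))

/-- Regularity makes `v` and the functions vanishing on `K` have no common zero, so they
generate `A`; writing `1 = h * v + d` gives the claim. -/
lemma Regular.exists_mul_apply_eq_one [CompleteSpace A] (hreg : Regular A)
    {K : Set (characterSpace ℂ A)} (hK : IsClosed K) {v : A} (hv : ∀ y ∈ K, y v ≠ 0) :
    ∃ h : A, ∀ y ∈ K, y (h * v) = 1 := by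
  have htop : Ideal.span {v} ⊔ gelfVanishingIdeal K = ⊤ := by
    refine Ideal.eq_top_of_forall_character_exists_ne_zero _ fun φ => ?_
    by_cases hφ : φ ∈ K
    · exact ⟨v, Ideal.mem_sup_left (Ideal.mem_span_singleton_self v), hv φ hφ⟩
    · obtain ⟨w, hwφ, hw⟩ := hreg φ Kᶜ hK.isOpen_compl hφ
      refine ⟨w, Ideal.mem_sup_right fun y hy => hw y (not_not_intro hy), ?_⟩
      rw [hwφ]
      exact one_ne_zero
  obtain ⟨s, hs, d, hd, hsd⟩ := Submodule.mem_sup.mp (htop ▸ Submodule.mem_top : (1 : A) ∈ _)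
  obtain ⟨h, rfl⟩ := Ideal.mem_span_singleton'.mp hs
  refine ⟨h, fun y hy => ?_⟩
  simpa [hd y hy] using congrArg y hsd

lemma Regular.exists_local_unit [CompleteSpace A] (hreg : Regular A)
    {x : characterSpace ℂ A} {U : Set (characterSpace ℂ A)} (hU : U ∈ 𝓝 x) :
    ∃ u : A, (∃ V ∈ 𝓝 x, ∀ y ∈ V, y u = 1) ∧ gelfSupp u ⊆ U := by
  obtain ⟨U₁, hU₁, hU₁closed, hU₁U⟩ := exists_mem_nhds_isClosed_subset hU
  obtain ⟨v, hvx, hv⟩ := hreg x (interior U₁) isOpen_interior (mem_interior_iff_mem_nhds.mpr hU₁)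
  have hvsupp : gelfSupp v ⊆ U₁ := closure_minimal
    (fun y hy => interior_subset (not_not.mp fun hyU => hy (hv y hyU))) hU₁closed
  have hxv : x ∈ gelfCoz v := by simp [gelfCoz, hvx]
  obtain ⟨K, hK, hKclosed, hKv⟩ :=
    exists_mem_nhds_isClosed_subset ((isOpen_gelfCoz v).mem_nhds hxv)
  obtain ⟨h, hh⟩ := hreg.exists_mul_apply_eq_one hKclosed hKv
  refine ⟨h * v, ⟨K, hK, hh⟩, ?_⟩
  rw [mul_comm]
  exact (gelfSupp_mul_subset_left v h).trans (hvsupp.trans hU₁U)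

end GelfandTransform

/-- With a local unit `u` at `x` supported in `U` and a Ditkin approximant `c` of `a`
(so `ĉ = 0` near `x` and `a c ≈ a`), `b = u (1 - c)` works: `b a = u (a - a c)`. -/
theorem ditkin_implies_conditionM
    [CompleteSpace A] (hreg : Regular A)
    (hditkin : DitkinCondition A) :
    ConditionM A := by
  refine ⟨hreg, fun x a hxa U hU ε hε => ?_⟩
  obtain ⟨u, ⟨K, hK, hu⟩, husupp⟩ := hreg.exists_local_unit hU
  obtain ⟨c, ⟨V, hV, hc⟩, hac⟩ := hditkin.1 a x hxa (ε / (‖u‖ + 1)) (by positivity)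
  refine ⟨u * (1 - c), ⟨K ∩ V, inter_mem hK hV, fun y hy => ?_⟩,
    (gelfSupp_mul_subset_left u _).trans husupp, ?_⟩
  · rw [map_mul, map_sub, map_one, hu y hy.1, hc y hy.2, sub_zero, mul_one]
  calc ‖u * (1 - c) * a‖ = ‖u * (a - a * c)‖ := by congr 1; ring
    _ ≤ ‖u‖ * ‖a - a * c‖ := norm_mul_le _ _
    _ = ‖u‖ * ‖a * c - a‖ := by rw [norm_sub_rev]
    _ < (‖u‖ + 1) * (ε / (‖u‖ + 1)) := by gcongr; linarith
    _ = ε := by field_simp
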